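/- Global-unitary purity formula: for a Haar-random unitary U on ℂ^d and a density matrix ρ, the purity satisfies tr(ρ²) = (d+1)·Σ_s E_U[P_U(s)²] − 1, where P_U(s) = ⟨s|UρU†|s⟩ and the sum runs over a fixed orthonormal basis {|s⟩}. -/

import Mathlib

/-!
Write `σ = UρU†`. Left invariance of `μ` makes the law of `σ` invariant under `σ ↦ VσV†`;
choosing `V` with a prescribed column gives `E[(x†σx)²] = (x†x)² E[σ_ss²]` for every vector `x`.
For `s ≠ t` and `x = e_s + iᵏ e_t`, `k = 0, …, 3`, averaging over `k` kills all cross terms except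
`σ_st σ_ts`, so `4 E[σ_ss²] = E[(σ_ss + σ_tt)² + 2 σ_st σ_ts]`. Summing over all pairs `(s, t)`
(a diagonal pair contributes `6 E[σ_ss²]`) and using `tr σ = tr ρ`, `tr σ² = tr ρ²` gives
`(d + 1) Σ_s E[σ_ss²] = (tr ρ)² + tr ρ²`.
-/

open MeasureTheory Matrix
open scoped ComplexOrder

noncomputable section

instance (d : ℕ) : MeasurableSpace (Matrix (Fin d) (Fin d) ℂ) := by
  unfold Matrix; infer_instance

open Unitary

theorem Matrix.star_transpose_dotProduct_mulVec_transpose {R n : Type*} [NonUnitalSemiring R]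
    [Star R] [Fintype n] (A B : Matrix n n R) (j : n) :
    star (Bᵀ j) ⬝ᵥ A *ᵥ Bᵀ j = (Bᴴ * A * B) j j := by
  rw [Matrix.mul_assoc, mul_apply']
  rfl

theorem Matrix.star_single_add_single_dotProduct_mulVec {R n : Type*} [CommSemiring R]
    [StarRing R] [Fintype n] [DecidableEq n] (A : Matrix n n R) (s t : n) (ω : R) :
    star (Pi.single s 1 + Pi.single t ω) ⬝ᵥ A *ᵥ (Pi.single s 1 + Pi.single t ω)
      = A s s + A s t * ω + star ω * A t s + star ω * ω * A t t := by
  simp [mulVec_add, dotProduct_add, add_dotProduct, mulVec_single]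
  ring

theorem Matrix.sum_sum_diag_add_sq_add_two_mul {R n : Type*} [CommSemiring R] [Fintype n]
    (A : Matrix n n R) :
    ∑ s, ∑ t, ((A s s + A t t) ^ 2 + 2 * (A s t * A t s))
      = 2 * Fintype.card n * ∑ s, A s s ^ 2 + 2 * A.trace ^ 2 + 2 * (A * A).trace := by
  simp only [add_sq, Finset.sum_add_distrib, ← Finset.mul_sum, ← Finset.sum_mul,
    Finset.sum_const, Finset.card_univ, nsmul_eq_mul, trace, diag, mul_apply]
  ring

theorem Matrix.trace_conjStarAlgAut {R n : Type*} [CommRing R] [StarRing R] [Fintype n]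
    [DecidableEq n] (U : unitaryGroup n R) (A : Matrix n n R) :
    (conjStarAlgAut R _ U A).trace = A.trace := by
  rw [conjStarAlgAut_apply, trace_mul_cycle, coe_star_mul_self, one_mul]

theorem Continuous.integrable_of_compactSpace {X E : Type*} [TopologicalSpace X] [CompactSpace X]
    [MeasurableSpace X] [OpensMeasurableSpace X] [NormedAddCommGroup E] {μ : Measure X}
    [IsFiniteMeasure μ] {f : X → E} (hf : Continuous f) : Integrable f μ :=
  hf.integrable_of_hasCompactSupport (.of_compactSpace f)

section RCLike

variable {𝕜 n : Type*} [RCLike 𝕜] [Fintype n] [DecidableEq n]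

instance Matrix.UnitaryGroup.instCompactSpace : CompactSpace (unitaryGroup n 𝕜) := by
  refine isCompact_iff_compactSpace.mp ?_
  have hball : IsCompact (Set.univ.pi fun _ : n => Set.univ.pi fun _ : n =>
      Metric.closedBall (0 : 𝕜) 1 : Set (Matrix n n 𝕜)) :=
    isCompact_univ_pi fun _ => isCompact_univ_pi fun _ => isCompact_closedBall 0 1
  exact hball.of_isClosed_subset (isClosed_unitary (R := Matrix n n 𝕜)) fun U hU i _ j _ => by
    simpa using entry_norm_bound_of_unitary hU i j

theorem Matrix.exists_mem_unitaryGroup_eq_smul_transpose (x : n → 𝕜) (j : n) :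
    ∃ U ∈ unitaryGroup n 𝕜, ∃ c : 𝕜, x = c • Uᵀ j := by
  by_cases hx : x = 0
  · exact ⟨1, one_mem _, 0, by simp [hx]⟩
  set v : EuclideanSpace 𝕜 n := (‖WithLp.toLp 2 x‖⁻¹ : 𝕜) • WithLp.toLp 2 x
  have hv : ‖v‖ = 1 := by
    simp [v, norm_smul, hx]
  have hon : Orthonormal 𝕜 (({j} : Set n).domRestrict fun _ => v) := by
    simp [hv]
  obtain ⟨b, hb⟩ := hon.exists_orthonormalBasis_extension_of_card_eq (by simp)
  refine ⟨_, (EuclideanSpace.basisFun n 𝕜).toMatrix_orthonormalBasis_mem_unitary b,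
    ‖WithLp.toLp 2 x‖, ?_⟩
  ext i
  simp [Module.Basis.toMatrix_apply, hb j rfl, v, hx]

variable [MeasurableSpace (unitaryGroup n 𝕜)] [MeasurableMul (unitaryGroup n 𝕜)]
  (μ : Measure (unitaryGroup n 𝕜)) [μ.IsMulLeftInvariant]

theorem integral_dotProduct_conjStarAlgAut_mulVec_pow (ρ : Matrix n n 𝕜) (x : n → 𝕜) (j : n)
    (k : ℕ) :
    ∫ U, (star x ⬝ᵥ conjStarAlgAut 𝕜 _ U ρ *ᵥ x) ^ k ∂μ
      = (star x ⬝ᵥ x) ^ k * ∫ U, conjStarAlgAut 𝕜 _ U ρ j j ^ k ∂μ := by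
  obtain ⟨W, hW, c, rfl⟩ := exists_mem_unitaryGroup_eq_smul_transpose x j
  have hquad (A : Matrix n n 𝕜) :
      star (c • Wᵀ j) ⬝ᵥ A *ᵥ (c • Wᵀ j) = star c * c * (Wᴴ * A * W) j j := by
    rw [star_smul, mulVec_smul, smul_dotProduct, dotProduct_smul,
      star_transpose_dotProduct_mulVec_transpose]
    simp only [smul_eq_mul, mul_assoc]
  have hnorm : star (c • Wᵀ j) ⬝ᵥ (c • Wᵀ j) = star c * c := by
    simpa [← star_eq_conjTranspose, (mem_unitaryGroup_iff').mp hW] using hquad 1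
  have hconj (U : unitaryGroup n 𝕜) :
      Wᴴ * conjStarAlgAut 𝕜 _ U ρ * W = conjStarAlgAut 𝕜 _ (star ⟨W, hW⟩ * U) ρ := by
    simp [Matrix.mul_assoc, star_eq_conjTranspose]
  simp_rw [hquad, hnorm, mul_pow, hconj, integral_const_mul]
  rw [integral_mul_left_eq_self (fun U => conjStarAlgAut 𝕜 _ U ρ j j ^ k)]

end RCLike

section Complex

variable {n : Type*} [Fintype n] [DecidableEq n] (ρ : Matrix n n ℂ)

@[fun_prop]
theorem continuous_conjStarAlgAut_apply (i j : n) :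
    Continuous fun U : unitaryGroup n ℂ => conjStarAlgAut ℂ _ U ρ i j := by
  simp only [conjStarAlgAut_apply]
  fun_prop

variable [MeasurableSpace (unitaryGroup n ℂ)] [OpensMeasurableSpace (unitaryGroup n ℂ)]
  (μ : Measure (unitaryGroup n ℂ))

theorem sum_sum_integral_conjStarAlgAut_diag_add_sq_add_two_mul [IsProbabilityMeasure μ] :
    ∑ s, ∑ t, ∫ U, ((conjStarAlgAut ℂ _ U ρ s s + conjStarAlgAut ℂ _ U ρ t t) ^ 2
        + 2 * (conjStarAlgAut ℂ _ U ρ s t * conjStarAlgAut ℂ _ U ρ t s)) ∂μ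
      = 2 * Fintype.card n * ∑ s, ∫ U, conjStarAlgAut ℂ _ U ρ s s ^ 2 ∂μ
        + 2 * ρ.trace ^ 2 + 2 * (ρ * ρ).trace := by
  have hpoint (U : unitaryGroup n ℂ) :
      ∑ s, ∑ t, ((conjStarAlgAut ℂ _ U ρ s s + conjStarAlgAut ℂ _ U ρ t t) ^ 2
        + 2 * (conjStarAlgAut ℂ _ U ρ s t * conjStarAlgAut ℂ _ U ρ t s))
      = 2 * Fintype.card n * ∑ s, conjStarAlgAut ℂ _ U ρ s s ^ 2 + 2 * ρ.trace ^ 2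
        + 2 * (ρ * ρ).trace := by
    rw [sum_sum_diag_add_sq_add_two_mul, trace_conjStarAlgAut, ← map_mul, trace_conjStarAlgAut]
  rw [Finset.sum_congr rfl fun s _ => (integral_finsetSum _ fun t _ =>
      Continuous.integrable_of_compactSpace (by fun_prop)).symm,
    ← integral_finsetSum _ fun s _ => Continuous.integrable_of_compactSpace (by fun_prop)]
  simp_rw [hpoint]
  rw [integral_add (Continuous.integrable_of_compactSpace (by fun_prop)) (integrable_const _),
    integral_add (Continuous.integrable_of_compactSpace (by fun_prop)) (integrable_const _),
    integral_const_mul,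
    integral_finsetSum _ fun s _ => Continuous.integrable_of_compactSpace (by fun_prop)]
  simp

variable [MeasurableMul (unitaryGroup n ℂ)] [μ.IsMulLeftInvariant]

theorem integral_conjStarAlgAut_diag_add_sq_add_two_mul [IsFiniteMeasure μ] {s t : n}
    (hst : s ≠ t) :
    ∫ U, ((conjStarAlgAut ℂ _ U ρ s s + conjStarAlgAut ℂ _ U ρ t t) ^ 2
        + 2 * (conjStarAlgAut ℂ _ U ρ s t * conjStarAlgAut ℂ _ U ρ t s)) ∂μ
      = 4 * ∫ U, conjStarAlgAut ℂ _ U ρ s s ^ 2 ∂μ := by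
  set x : ℕ → n → ℂ := fun k => Pi.single s 1 + Pi.single t (Complex.I ^ k)
  have hunit (k : ℕ) : star (Complex.I ^ k) * Complex.I ^ k = 1 := by
    simp [← mul_pow, Complex.conj_I]
  have hquad (k : ℕ) (A : Matrix n n ℂ) : star (x k) ⬝ᵥ A *ᵥ x k
      = A s s + A t t + A s t * Complex.I ^ k + star (Complex.I ^ k) * A t s := by
    rw [star_single_add_single_dotProduct_mulVec, hunit]
    ring
  have hnorm (k : ℕ) : star (x k) ⬝ᵥ x k = 2 := by
    simpa [hst, hst.symm, one_add_one_eq_two] using hquad k 1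
  have hsum (a b c : ℂ) :
      ∑ k ∈ Finset.range 4, (a + b * Complex.I ^ k + star (Complex.I ^ k) * c) ^ 2
        = 4 * (a ^ 2 + 2 * (b * c)) := by
    simp [Finset.sum_range_succ, Complex.conj_I, pow_succ]
    linear_combination 2 * (b - c) ^ 2 * Complex.I_sq
  calc _ = (1 / 4) * ∫ U, ∑ k ∈ Finset.range 4,
          (star (x k) ⬝ᵥ conjStarAlgAut ℂ _ U ρ *ᵥ x k) ^ 2 ∂μ := by
        simp_rw [hquad, hsum, integral_const_mul]
        ring
    _ = (1 / 4) * ∑ k ∈ Finset.range 4, 2 ^ 2 * ∫ U, conjStarAlgAut ℂ _ U ρ s s ^ 2 ∂μ := by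
        rw [integral_finsetSum _ fun k _ =>
          Continuous.integrable_of_compactSpace (by simp_rw [hquad]; fun_prop)]
        simp_rw [integral_dotProduct_conjStarAlgAut_mulVec_pow μ ρ _ s, hnorm]
    _ = 4 * ∫ U, conjStarAlgAut ℂ _ U ρ s s ^ 2 ∂μ := by
        rw [Finset.sum_const, Finset.card_range, nsmul_eq_mul]
        ring

theorem card_add_one_mul_sum_integral_conjStarAlgAut_diag_sq [IsProbabilityMeasure μ] :
    (Fintype.card n + 1) * ∑ s, ∫ U, conjStarAlgAut ℂ _ U ρ s s ^ 2 ∂μ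
      = ρ.trace ^ 2 + (ρ * ρ).trace := by
  set m : n → ℂ := fun s => ∫ U, conjStarAlgAut ℂ _ U ρ s s ^ 2 ∂μ
  have hpair (s t : n) :
      ∫ U, ((conjStarAlgAut ℂ _ U ρ s s + conjStarAlgAut ℂ _ U ρ t t) ^ 2
        + 2 * (conjStarAlgAut ℂ _ U ρ s t * conjStarAlgAut ℂ _ U ρ t s)) ∂μ
      = 4 * m s + if s = t then 2 * m s else 0 := by
    rcases eq_or_ne s t with rfl | hst
    · rw [if_pos rfl, ← add_mul, ← integral_const_mul]
      congr with U
      ring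
    · rw [if_neg hst, add_zero]
      exact integral_conjStarAlgAut_diag_add_sq_add_two_mul ρ μ hst
  have hcount := sum_sum_integral_conjStarAlgAut_diag_add_sq_add_two_mul ρ μ
  simp_rw [hpair, Finset.sum_add_distrib, Finset.sum_ite_eq, Finset.mem_univ, if_true,
    Finset.sum_const, Finset.card_univ, nsmul_eq_mul, ← Finset.mul_sum] at hcount
  linear_combination hcount / 2

end Complex

instance (d : ℕ) : BorelSpace (Matrix (Fin d) (Fin d) ℂ) :=
  inferInstanceAs (BorelSpace (Fin d → Fin d → ℂ))

theorem haar_purity_formula (d : ℕ)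
    (ρ : Matrix (Fin d) (Fin d) ℂ) (hτ : ρ.trace = 1)
    (μ : Measure (Matrix.unitaryGroup (Fin d) ℂ)) [IsProbabilityMeasure μ]
    (hHaar : ∀ V : Matrix.unitaryGroup (Fin d) ℂ, μ.map (fun U => V * U) = μ) :
    (ρ ^ 2).trace
      = ((d : ℂ) + 1) *
          (∑ s : Fin d, ∫ U : Matrix.unitaryGroup (Fin d) ℂ,
            ((((U : Matrix (Fin d) (Fin d) ℂ) * ρ *
              (U : Matrix (Fin d) (Fin d) ℂ)ᴴ) s s) ^ 2) ∂μ) - 1 := by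
  have : μ.IsMulLeftInvariant := ⟨hHaar⟩
  have h := card_add_one_mul_sum_integral_conjStarAlgAut_diag_sq ρ μ
  simp only [Fintype.card_fin, hτ, conjStarAlgAut_apply, star_eq_conjTranspose] at h
  rw [sq ρ]
  linear_combination -h
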